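/- Let G be a finitely generated group acting 3-discontinuously and 2-cocompactly on a compactum T. Then for every c > 0 there is no c-quasigeodesic horocycle at a conical point: there is no bi-infinite c-quasigeodesic γ : ℤ → G with γ(+∞) = γ(−∞) = p for p conical. -/

import Mathlib

open Filter Topology

/-- The vertex set of a locally finite connected graph, presented via its
graph metric `d` (an integer-valued geodesic metric with finite balls). -/
structure GraphDist (V : Type) where
  d : V → V → ℕ
  d_self : ∀ x, d x x = 0
  eq_of_d : ∀ x y, d x y = 0 → x = y
  d_symm : ∀ x y, d x y = d y x
  d_tri : ∀ x y z, d x z ≤ d x y + d y z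
  locallyFinite : ∀ (x : V) (n : ℕ), {y | d x y ≤ n}.Finite
  geodesic : ∀ x y, 0 < d x y → ∃ z, d x z = 1 ∧ d z y + 1 = d x y

namespace GraphDist

variable {V : Type} (G : GraphDist V)

/-- `γ : Fin (n+1) → V` is an edge path (consecutive vertices at distance `≤ 1`). -/
def IsPath {n : ℕ} (γ : Fin (n + 1) → V) : Prop :=
  ∀ i : Fin n, G.d (γ i.castSucc) (γ i.succ) ≤ 1

/-- Floyd length of a path with respect to the scaling function `f` and
basepoint `v`: the edge `{x,y}` has length `f (d v {x,y})`. -/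
def floydLen (f : ℕ → ℝ) (v : V) {n : ℕ} (γ : Fin (n + 1) → V) : ℝ :=
  ∑ i : Fin n, f (min (G.d v (γ i.castSucc)) (G.d v (γ i.succ)))

/-- Floyd distance: infimal Floyd length of edge paths joining two vertices. -/
noncomputable def floydDist (f : ℕ → ℝ) (v : V) (a b : V) : ℝ :=
  sInf {L | ∃ (n : ℕ) (γ : Fin (n + 1) → V), G.IsPath γ ∧ γ 0 = a ∧
    γ (Fin.last n) = b ∧ L = G.floydLen f v γ}

/-- A finite `c`-quasigeodesic path. -/
def IsQuasigeodesic (c : ℝ) {n : ℕ} (γ : Fin (n + 1) → V) : Prop :=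
  G.IsPath γ ∧ ∀ s t : Fin (n + 1),
    (1 / c) * |(s : ℝ) - (t : ℝ)| - c ≤ (G.d (γ s) (γ t) : ℝ) ∧
    (G.d (γ s) (γ t) : ℝ) ≤ c * |(s : ℝ) - (t : ℝ)| + c

/-- A `c`-quasigeodesic ray. -/
def IsQuasigeodesicRay (c : ℝ) (γ : ℕ → V) : Prop :=
  (∀ n : ℕ, G.d (γ n) (γ (n + 1)) ≤ 1) ∧ ∀ s t : ℕ,
    (1 / c) * |(s : ℝ) - (t : ℝ)| - c ≤ (G.d (γ s) (γ t) : ℝ) ∧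
    (G.d (γ s) (γ t) : ℝ) ≤ c * |(s : ℝ) - (t : ℝ)| + c

/-- A finite `α`-distorted (`α`-geodesic) path. -/
def IsAlphaPath (α : ℕ → ℝ) {n : ℕ} (γ : Fin (n + 1) → V) : Prop :=
  G.IsPath γ ∧ ∀ s t : Fin (n + 1),
    (G.d (γ s) (γ t) : ℝ) ≤ α (Nat.dist s t) ∧
    (Nat.dist (s : ℕ) (t : ℕ) : ℝ) ≤ α (G.d (γ s) (γ t))

/-- An `α`-geodesic ray. -/
def IsAlphaRay (α : ℕ → ℝ) (γ : ℕ → V) : Prop :=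
  (∀ n : ℕ, G.d (γ n) (γ (n + 1)) ≤ 1) ∧ ∀ s t : ℕ,
    (G.d (γ s) (γ t) : ℝ) ≤ α (Nat.dist s t) ∧
    (Nat.dist s t : ℝ) ≤ α (G.d (γ s) (γ t))

end GraphDist

/-- `f` is a Floyd scaling function with ratio constant `K`. -/
def IsFloydFunction (f : ℕ → ℝ) (K : ℝ) : Prop :=
  (∀ n, 0 < f n) ∧ (∀ n, 1 ≤ f n / f (n + 1) ∧ f n / f (n + 1) ≤ K) ∧ Summable f

/-- `α` is a distortion function: non-decreasing with `α n ≥ n`. -/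
def IsDistortion (α : ℕ → ℝ) : Prop :=
  (∀ n, 0 < α n) ∧ Monotone α ∧ ∀ n : ℕ, (n : ℝ) ≤ α n

/-- The set of ordered triples of pairwise distinct points of `T`
(a model for the space `Θ³T` of distinct triples). -/
def distinctTriples (T : Type) : Set (T × T × T) :=
  {x | x.1 ≠ x.2.1 ∧ x.1 ≠ x.2.2 ∧ x.2.1 ≠ x.2.2}

/-- Diagonal action of a group element on triples. -/
def tripleSmul {G T : Type} [Group G] [MulAction G T] (g : G) (x : T × T × T) :
    T × T × T :=
  (g • x.1, g • x.2.1, g • x.2.2)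

/-- The action of `G` on `T` is 3-discontinuous (convergence property): the
induced action on the space of distinct triples is properly discontinuous. -/
def ThreeDiscontinuous (G T : Type) [Group G] [MulAction G T]
    [TopologicalSpace T] : Prop :=
  ∀ K L : Set (T × T × T), K ⊆ distinctTriples T → L ⊆ distinctTriples T →
    IsCompact K → IsCompact L →
    {g : G | (tripleSmul g '' K ∩ L).Nonempty}.Finite

/-- The action of `G` on `T` is 3-cocompact: `Θ³T / G` is compact, i.e. there is
a compact fundamental set for the action on distinct triples. -/
def ThreeCocompact (G T : Type) [Group G] [MulAction G T]
    [TopologicalSpace T] : Prop :=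
  ∃ K : Set (T × T × T), K ⊆ distinctTriples T ∧ IsCompact K ∧
    ∀ x ∈ distinctTriples T, ∃ g : G, tripleSmul g x ∈ K

/-- The action of `G` on `T` is 2-cocompact: there is a compact fundamental set
for the action on pairs of distinct points. -/
def TwoCocompact (G T : Type) [Group G] [MulAction G T]
    [TopologicalSpace T] : Prop :=
  ∃ K : Set (T × T), K ⊆ {x | x.1 ≠ x.2} ∧ IsCompact K ∧
    ∀ x : T × T, x.1 ≠ x.2 → ∃ g : G, (g • x.1, g • x.2) ∈ K

/-- `x` is a conical (limit) point for the action of `G` on `T`: there are an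
injective sequence `gₙ` in `G` and distinct points `a ≠ b` with `gₙ • y → a`
for every `y ≠ x` and `gₙ • x → b`. -/
def IsConical (G : Type) {T : Type} [Group G] [MulAction G T]
    [TopologicalSpace T] (x : T) : Prop :=
  ∃ (g : ℕ → G) (a b : T), Function.Injective g ∧ a ≠ b ∧
    (∀ y : T, y ≠ x → Tendsto (fun n => g n • y) atTop (nhds a)) ∧
    Tendsto (fun n => g n • x) atTop (nhds b)

/-- `x` is a limit point of the subgroup `H` acting on `T`: some orbit
accumulates at `x` along an injective sequence in `H`. -/
def IsLimitPointOf {G T : Type} [Group G] [MulAction G T] [TopologicalSpace T]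
    (H : Subgroup G) (x : T) : Prop :=
  ∃ u : ℕ → H, Function.Injective u ∧
    ∃ t : T, Tendsto (fun n => (u n : G) • t) atTop (nhds x)

/-- `p` is a parabolic point: the limit set of its stabilizer is exactly `{p}`. -/
def IsParabolicPt (G : Type) {T : Type} [Group G] [MulAction G T]
    [TopologicalSpace T] (p : T) : Prop :=
  {x : T | IsLimitPointOf (MulAction.stabilizer G p) x} = {p}
namespace GraphDist

variable {V : Type} (G : GraphDist V)

/-- A bi-infinite `c`-quasigeodesic line. -/
def IsQuasigeodesicLine (c : ℝ) (γ : ℤ → V) : Prop :=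
  (∀ n : ℤ, G.d (γ n) (γ (n + 1)) ≤ 1) ∧ ∀ s t : ℤ,
    (1 / c) * |(s : ℝ) - (t : ℝ)| - c ≤ (G.d (γ s) (γ t) : ℝ) ∧
    (G.d (γ s) (γ t) : ℝ) ≤ c * |(s : ℝ) - (t : ℝ)| + c

end GraphDist

/-- The `c`-quasigeodesic hull of a subset `M` of the attractor sum
`T̃ = T ⊔ G` (where `G` sits in `T̃` as the orbit of the basepoint `o`): the
union of `M` with the images of all finite `c`-quasigeodesics with endpoints in
`M`, all `c`-quasigeodesic rays with start and target in `M`, and all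
bi-infinite `c`-quasigeodesics with both targets in `M`. -/
def qHull {G Tt : Type} [Group G] [MulAction G Tt] [TopologicalSpace Tt]
    (dG : GraphDist G) (o : Tt) (c : ℝ) (M : Set Tt) : Set Tt :=
  M ∪
  {x | ∃ (n : ℕ) (γ : Fin (n + 1) → G), dG.IsQuasigeodesic c γ ∧
    γ 0 • o ∈ M ∧ γ (Fin.last n) • o ∈ M ∧ ∃ i, x = γ i • o} ∪
  {x | ∃ γ : ℕ → G, dG.IsQuasigeodesicRay c γ ∧ γ 0 • o ∈ M ∧
    (∃ q ∈ M, Tendsto (fun k : ℕ => γ k • o) atTop (nhds q)) ∧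
    ∃ i, x = γ i • o} ∪
  {x | ∃ γ : ℤ → G, dG.IsQuasigeodesicLine c γ ∧
    (∃ q ∈ M, Tendsto (fun k : ℕ => γ (k : ℤ) • o) atTop (nhds q)) ∧
    (∃ q ∈ M, Tendsto (fun k : ℕ => γ (-(k : ℤ)) • o) atTop (nhds q)) ∧
    ∃ i : ℤ, x = γ i • o}

/-!
Let `gₙ` witness that `p` is conical: `gₙ • y → a` for `y ≠ p` and `gₙ • p → b ≠ a`.
Orbit points are isolated and `γ` leaves every finite set, so `γ 0 • o ≠ p` and
`gₙ • γ 0 • o → a`. Both halves of `gₙ γ` run from `gₙ γ 0` to `gₙ • p`, and as the `gₙ` are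
distinct, one of the halves stays at graph distance `ρₙ → ∞` from `1`. On that half the
quasigeodesic lower bound, measured from its vertex nearest to `1`, bounds the Floyd lengths of
the edges by the terms of a series whose sum tends to `0` as `ρₙ → ∞` (Karlsson's lemma).
Through the Floyd map this gives `dist (gₙ • γ 0 • o) (gₙ • p) → 0`, hence `a = b`.
-/

open Finset

lemma IsFloydFunction.antitone {f : ℕ → ℝ} {K : ℝ} (hf : IsFloydFunction f K) : Antitone f :=
  antitone_nat_of_succ_le fun n => (one_le_div (hf.1 (n + 1))).1 (hf.2.1 n).1

lemma summable_comp_sub {φ : ℕ → ℝ} (hφ : Summable φ) (E : ℕ) :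
    Summable fun j => φ (j - E) :=
  (summable_nat_add_iff E).1 (by simpa only [Nat.add_sub_cancel] using hφ)

lemma summable_comp_div {φ : ℕ → ℝ} (h0 : ∀ n, 0 ≤ φ n) (hφ : Summable φ) {D : ℕ}
    (hD : 0 < D) : Summable fun j => φ (j / D) := by
  have : NeZero D := NeZero.of_pos hD
  have hprod : Summable fun x : ℕ × Fin D => φ x.1 :=
    (summable_prod_of_nonneg fun x => h0 x.1).2
      ⟨fun _ => .of_finite, by simpa using hφ.mul_left (D : ℝ)⟩
  exact hprod.comp_injective (Nat.divModEquiv D).injective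

lemma summable_comp_natDist {φ : ℕ → ℝ} (hφ : Summable φ) (m : ℕ) :
    Summable fun k => φ (Nat.dist k m) := by
  have hshift : ∀ n, Nat.dist (n + m) m = n := fun n => by unfold Nat.dist; omega
  exact (summable_nat_add_iff m).1 (by simpa only [hshift] using hφ)

lemma tsum_comp_natDist_le {φ : ℕ → ℝ} (h0 : ∀ n, 0 ≤ φ n) (hφ : Summable φ) (m : ℕ) :
    ∑' k, φ (Nat.dist k m) ≤ 2 * ∑' k, φ k := by
  have hshift : ∀ n, Nat.dist (n + m) m = n := fun n => by unfold Nat.dist; omega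
  rw [← (summable_comp_natDist hφ m).sum_add_tsum_nat_add m]
  simp only [hshift, two_mul]
  gcongr
  calc ∑ k ∈ range m, φ (Nat.dist k m) = ∑ k ∈ range m, φ (m - 1 - k + 1) :=
        sum_congr rfl fun k hk => by
          rw [mem_range] at hk
          congr 1
          unfold Nat.dist
          omega
    _ = ∑ k ∈ range m, φ (k + 1) := sum_range_reflect (fun k => φ (k + 1)) m
    _ ≤ ∑ k ∈ range (m + 1), φ k := by
        rw [sum_range_succ']
        linarith [h0 0]
    _ ≤ ∑' k, φ k := hφ.sum_le_tsum _ fun k _ => h0 k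

/-- The `j`-th term is `f` at a lower bound for the distance to the basepoint of the edge `j`
steps away from the vertex nearest to the basepoint, on a `C`-quasigeodesic ray staying at
distance `≥ ρ` from the basepoint. -/
noncomputable def karlssonBound (f : ℕ → ℝ) (C ρ : ℕ) : ℝ :=
  2 * ∑' j : ℕ, f (max ρ ((j / C - (C + 1)) / 2))

section KarlssonBound

variable {f : ℕ → ℝ}

lemma summable_comp_div_sub_div (h0 : ∀ n, 0 ≤ f n) (hsum : Summable f) {C : ℕ}
    (hC : 0 < C) : Summable fun j : ℕ => f ((j / C - (C + 1)) / 2) :=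
  summable_comp_div (fun _ => h0 _)
    (summable_comp_sub (summable_comp_div h0 hsum two_pos) (C + 1)) hC

lemma summable_comp_max_div (h0 : ∀ n, 0 ≤ f n) (hanti : Antitone f) (hsum : Summable f)
    {C : ℕ} (hC : 0 < C) (ρ : ℕ) :
    Summable fun j : ℕ => f (max ρ ((j / C - (C + 1)) / 2)) :=
  (summable_comp_div_sub_div h0 hsum hC).of_nonneg_of_le (fun _ => h0 _)
    fun _ => hanti (le_max_right _ _)

lemma tendsto_karlssonBound (h0 : ∀ n, 0 ≤ f n) (hanti : Antitone f) (hsum : Summable f)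
    {C : ℕ} (hC : 0 < C) : Tendsto (karlssonBound f C) atTop (𝓝 0) := by
  have hterm : ∀ j : ℕ, Tendsto (fun ρ : ℕ => f (max ρ ((j / C - (C + 1)) / 2))) atTop (𝓝 0) :=
    fun j => hsum.tendsto_atTop_zero.comp
      (tendsto_atTop_mono (fun ρ => le_max_left ρ _) tendsto_id)
  have hseries := tendsto_tsum_of_dominated_convergence (summable_comp_div_sub_div h0 hsum hC)
    hterm (.of_forall fun ρ j => by
      rw [Real.norm_of_nonneg (h0 _)]
      exact hanti (le_max_right _ _))
  rw [tsum_zero] at hseries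
  unfold karlssonBound
  simpa only [mul_zero] using hseries.const_mul 2

end KarlssonBound

lemma Nat.div_ceil_le_add_ceil {c : ℝ} (hc : 0 < c) {j d : ℕ} (h : 1 / c * j - c ≤ d) :
    j / ⌈c⌉₊ ≤ d + ⌈c⌉₊ := by
  have hC : c ≤ ⌈c⌉₊ := Nat.le_ceil c
  have hdiv : ((j / ⌈c⌉₊ : ℕ) : ℝ) ≤ 1 / c * j := calc
    ((j / ⌈c⌉₊ : ℕ) : ℝ) ≤ j / ⌈c⌉₊ := Nat.cast_div_le
    _ ≤ j / c := div_le_div_of_nonneg_left (Nat.cast_nonneg j) hc hC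
    _ = 1 / c * j := by ring
  exact_mod_cast (show ((j / ⌈c⌉₊ : ℕ) : ℝ) ≤ d + ⌈c⌉₊ by linarith)

namespace GraphDist

variable {V : Type} {G : GraphDist V}

lemma floydDist_le_of_d_le_one {f : ℕ → ℝ} (h0 : ∀ n, 0 ≤ f n) (v : V)
    {a b : V} (hab : G.d a b ≤ 1) : G.floydDist f v a b ≤ f (min (G.d v a) (G.d v b)) := by
  refine csInf_le ⟨0, ?_⟩ ⟨1, ![a, b], ?_, rfl, rfl, ?_⟩
  · rintro _ ⟨n, γ, -, -, -, rfl⟩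
    exact sum_nonneg fun i _ => h0 _
  · intro i
    fin_cases i
    simpa using hab
  · simp [floydLen]

lemma IsQuasigeodesicLine.mul_left [Group V] (hinv : ∀ g x y : V, G.d (g * x) (g * y) = G.d x y)
    {c : ℝ} {γ : ℤ → V} (hγ : G.IsQuasigeodesicLine c γ) (g : V) :
    G.IsQuasigeodesicLine c fun k => g * γ k := by
  simpa only [IsQuasigeodesicLine, hinv] using hγ

lemma IsQuasigeodesicLine.comp_neg {c : ℝ} {γ : ℤ → V} (hγ : G.IsQuasigeodesicLine c γ) :
    G.IsQuasigeodesicLine c fun k => γ (-k) := by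
  refine ⟨fun n => ?_, fun s t => ?_⟩
  · simpa only [neg_add', sub_add_cancel, G.d_symm (γ (-n - 1))] using hγ.1 (-n - 1)
  · have habs : |((-s : ℤ) : ℝ) - ((-t : ℤ) : ℝ)| = |(s : ℝ) - t| := by
      push_cast
      rw [← abs_neg]
      ring_nf
    simpa only [habs] using hγ.2 (-s) (-t)

lemma IsQuasigeodesicLine.isQuasigeodesicRay {c : ℝ} {γ : ℤ → V}
    (hγ : G.IsQuasigeodesicLine c γ) : G.IsQuasigeodesicRay c fun k : ℕ => γ k :=
  ⟨fun n => by simpa using hγ.1 n, fun s t => by simpa using hγ.2 s t⟩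

lemma IsQuasigeodesicRay.natDist_div_le {c : ℝ} (hc : 0 < c) {δ : ℕ → V}
    (hδ : G.IsQuasigeodesicRay c δ) (s t : ℕ) :
    Nat.dist s t / ⌈c⌉₊ ≤ G.d (δ s) (δ t) + ⌈c⌉₊ := by
  refine Nat.div_ceil_le_add_ceil hc ?_
  have hcast : (Nat.dist s t : ℝ) = |(s : ℝ) - t| := by
    rcases le_total s t with h | h
    · rw [Nat.dist_eq_sub_of_le h, abs_sub_comm, abs_of_nonneg (by simpa using h)]
      push_cast [h]
      ring
    · rw [Nat.dist_eq_sub_of_le_right h, abs_of_nonneg (by simpa using h)]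
      push_cast [h]
      ring
  rw [hcast]
  exact (hδ.2 s t).1

lemma IsQuasigeodesicRay.frequently_ne {c : ℝ} (hc : 0 < c) {δ : ℕ → V}
    (hδ : G.IsQuasigeodesicRay c δ) (g : V) : ∃ᶠ k in atTop, δ k ≠ g := by
  set C := ⌈c⌉₊
  have hC : 0 < C := Nat.ceil_pos.2 hc
  rw [Filter.Frequently, eventually_atTop]
  rintro ⟨N, hN⟩
  have h := hδ.natDist_div_le hc N (N + C * (C + 1))
  rw [not_not.1 (hN N le_rfl), not_not.1 (hN _ (Nat.le_add_right _ _)), G.d_self,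
    Nat.dist_eq_sub_of_le (Nat.le_add_right _ _), Nat.add_sub_cancel_left,
    Nat.mul_div_cancel_left _ hC] at h
  omega

lemma IsQuasigeodesicRay.tendsto_ne {X : Type} [TopologicalSpace X] {c : ℝ} (hc : 0 < c)
    {π : V → X} (hπ : Function.Injective π) (hopen : ∀ g, IsOpen ({π g} : Set X)) {δ : ℕ → V}
    (hδ : G.IsQuasigeodesicRay c δ) {q : X} (hq : Tendsto (fun k => π (δ k)) atTop (𝓝 q))
    (g : V) : q ≠ π g := by
  rintro rfl
  obtain ⟨k, hne, hk⟩ :=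
    ((hδ.frequently_ne hc g).and_eventually (hq ((hopen g).mem_nhds rfl))).exists
  exact hne (hπ hk)

theorem IsQuasigeodesicRay.dist_le_karlssonBound {X : Type} [MetricSpace X] {f : ℕ → ℝ}
    (h0 : ∀ n, 0 ≤ f n) (hanti : Antitone f) (hsum : Summable f) {π : V → X} (v : V)
    (hπ : ∀ g h, dist (π g) (π h) ≤ G.floydDist f v g h) {c : ℝ} (hc : 0 < c) {δ : ℕ → V}
    (hδ : G.IsQuasigeodesicRay c δ) {q : X} (hq : Tendsto (fun k => π (δ k)) atTop (𝓝 q)) :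
    dist (π (δ 0)) q ≤ karlssonBound f ⌈c⌉₊ (⨅ k, G.d v (δ k)) := by
  set C := ⌈c⌉₊
  have hC : 0 < C := Nat.ceil_pos.2 hc
  set ρ := ⨅ k, G.d v (δ k)
  obtain ⟨k₀, hk₀ : G.d v (δ k₀) = ρ⟩ : ρ ∈ Set.range fun k => G.d v (δ k) :=
    csInf_mem (Set.range_nonempty _)
  have hρ : ∀ k, ρ ≤ G.d v (δ k) := fun k => ciInf_le (OrderBot.bddBelow _) k
  have hfar : ∀ k, Nat.dist k k₀ / C ≤ ρ + G.d v (δ k) + C := fun k => by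
    have htri := G.d_tri (δ k₀) v (δ k)
    rw [G.d_symm _ v, hk₀] at htri
    have hspan : Nat.dist k₀ k / C ≤ G.d (δ k₀) (δ k) + C := hδ.natDist_div_le hc k₀ k
    rw [Nat.dist_comm] at hspan
    omega
  have hnext : ∀ k, Nat.dist k k₀ / C ≤ Nat.dist (k + 1) k₀ / C + 1 := fun k =>
    (Nat.div_le_div_right (by unfold Nat.dist; omega)).trans (Nat.add_div_right _ hC).le
  have hstep : ∀ k, dist (π (δ k)) (π (δ (k + 1)))
      ≤ f (max ρ ((Nat.dist k k₀ / C - (C + 1)) / 2)) := fun k => by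
    refine (hπ _ _).trans ((floydDist_le_of_d_le_one h0 v (hδ.1 k)).trans (hanti ?_))
    have := hfar k
    have := hfar (k + 1)
    have := hnext k
    have := hρ k
    have := hρ (k + 1)
    omega
  have hsum' := summable_comp_max_div h0 hanti hsum hC ρ
  calc dist (π (δ 0)) q
      ≤ ∑' k, f (max ρ ((Nat.dist k k₀ / C - (C + 1)) / 2)) :=
        dist_le_tsum_of_dist_le_of_tendsto₀ _ hstep (summable_comp_natDist hsum' k₀) hq
    _ ≤ karlssonBound f C ρ := tsum_comp_natDist_le (fun _ => h0 _) hsum' k₀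

lemma IsQuasigeodesicLine.tendsto_max_iInf_d [Group V]
    (hinv : ∀ g x y : V, G.d (g * x) (g * y) = G.d x y) {c : ℝ} (hc : 0 < c) {γ : ℤ → V}
    (hγ : G.IsQuasigeodesicLine c γ) {g : ℕ → V} (hg : Function.Injective g) :
    Tendsto (fun n => max (⨅ k : ℕ, G.d 1 (g n * γ k)) (⨅ k : ℕ, G.d 1 (g n * γ (-k))))
      atTop atTop := by
  set C := ⌈c⌉₊
  have hC : 0 < C := Nat.ceil_pos.2 hc
  refine tendsto_atTop.2 fun R => ?_
  rw [← Nat.cofinite_eq_atTop, eventually_cofinite]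
  refine (((G.locallyFinite 1 R).image2 (fun u w => u * w⁻¹)
    ((Set.finite_Iio ((2 * R + C + 1) * C)).image fun k : ℕ => γ (-k))).preimage
    hg.injOn).subset fun n hn => ?_
  replace hn := max_lt_iff.1 (not_le.1 hn)
  obtain ⟨i, hi⟩ := exists_lt_of_ciInf_lt hn.1
  obtain ⟨j, hj⟩ := exists_lt_of_ciInf_lt hn.2
  have hclose : G.d (γ (-(j : ℤ))) (γ i) ≤ 2 * R := by
    have htri := G.d_tri (g n * γ (-(j : ℤ))) 1 (g n * γ i)
    rw [hinv, G.d_symm _ 1] at htri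
    omega
  have hspan : (j + i) / C ≤ 2 * R + C := by
    refine (Nat.div_ceil_le_add_ceil (d := G.d (γ (-(j : ℤ))) (γ i)) hc ?_).trans (by omega)
    have habs : |((-j : ℤ) : ℝ) - ((i : ℤ) : ℝ)| = ((j + i : ℕ) : ℝ) := by
      push_cast
      rw [abs_of_nonpos (by linarith [Nat.cast_nonneg (α := ℝ) i, Nat.cast_nonneg (α := ℝ) j])]
      ring
    simpa only [habs] using (hγ.2 (-j) i).1
  have hjB : j < (2 * R + C + 1) * C := by
    have := Nat.lt_mul_of_div_lt (show (j + i) / C < 2 * R + C + 1 by omega) hC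
    omega
  exact ⟨g n * γ (-j), hj.le, γ (-j), ⟨j, hjB, rfl⟩, mul_inv_cancel_right _ _⟩

end GraphDist

theorem stmt17_general {G Tt : Type} [Group G]
    [MetricSpace Tt] [MulAction G Tt]
    (hcont : ∀ g : G, Continuous (fun x : Tt => g • x))
    (o : Tt) (hinj : Function.Injective (fun g : G => g • o))
    (hopen : ∀ g : G, IsOpen ({g • o} : Set Tt))
    (dG : GraphDist G)
    (hinv : ∀ g x y : G, dG.d (g * x) (g * y) = dG.d x y)
    (f : ℕ → ℝ) (K : ℝ) (hf : IsFloydFunction f K)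
    (hcomp : ∀ g h : G, dist (g • o) (h • o) ≤ dG.floydDist f 1 g h)
    (c : ℝ) (hc : 0 < c) (p : Tt) (hp : IsConical G p)
    (γ : ℤ → G) (hγ : dG.IsQuasigeodesicLine c γ) :
    ¬ (Tendsto (fun k : ℕ => γ (k : ℤ) • o) atTop (nhds p) ∧
       Tendsto (fun k : ℕ => γ (-(k : ℤ)) • o) atTop (nhds p)) := by
  rintro ⟨hplus, hminus⟩
  obtain ⟨g, a, b, hg, hab, ha, hb⟩ := hp
  have h0 : ∀ n, 0 ≤ f n := fun n => (hf.1 n).le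
  have hne : γ 0 • o ≠ p := (hγ.isQuasigeodesicRay.tendsto_ne hc hinj hopen hplus (γ 0)).symm
  have hhalf : ∀ n {δ : ℤ → G}, dG.IsQuasigeodesicLine c δ → δ 0 = γ 0 →
      Tendsto (fun k : ℕ => δ k • o) atTop (𝓝 p) →
      dist (g n • γ 0 • o) (g n • p) ≤ karlssonBound f ⌈c⌉₊ (⨅ k : ℕ, dG.d 1 (g n * δ k)) := by
    intro n δ hδ hδ0 hδp
    have hlim : Tendsto (fun k : ℕ => (g n * δ k) • o) atTop (𝓝 (g n • p)) := by
      simpa only [mul_smul, Function.comp_def] using ((hcont (g n)).tendsto p).comp hδp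
    simpa only [Nat.cast_zero, hδ0, mul_smul] using
      (hδ.mul_left hinv (g n)).isQuasigeodesicRay.dist_le_karlssonBound h0 hf.antitone hf.2.2
        (π := (· • o)) 1 hcomp hc hlim
  have hbound : ∀ n, dist (g n • γ 0 • o) (g n • p) ≤ karlssonBound f ⌈c⌉₊
      (max (⨅ k : ℕ, dG.d 1 (g n * γ k)) (⨅ k : ℕ, dG.d 1 (g n * γ (-k)))) := fun n => by
    rcases max_choice (⨅ k : ℕ, dG.d 1 (g n * γ k)) (⨅ k : ℕ, dG.d 1 (g n * γ (-k))) with h | h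
    · rw [h]
      exact hhalf n hγ rfl hplus
    · rw [h]
      exact hhalf n hγ.comp_neg (by rw [neg_zero]) hminus
  have hdist : Tendsto (fun n => dist (g n • γ 0 • o) (g n • p)) atTop (𝓝 0) :=
    squeeze_zero (fun _ => dist_nonneg) hbound
      ((tendsto_karlssonBound h0 hf.antitone hf.2.2 (Nat.ceil_pos.2 hc)).comp
        (hγ.tendsto_max_iInf_d hinv hc hg))
  exact hab (tendsto_nhds_unique ((ha _ hne).congr_dist hdist) hb)

/-- in the attractor sum `T̃ = Λ(G) ⊔ G` of a 3-discontinuous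
2-cocompact action of a finitely generated group `G`, there is no
`c`-quasigeodesic horocycle at a conical point: no bi-infinite
`c`-quasigeodesic `γ : ℤ → G` has both its targets `γ(±∞)` equal to a conical
point `p`. -/
theorem stmt17 {G Tt : Type} [Group G]
    [MetricSpace Tt] [CompactSpace Tt] [MulAction G Tt]
    (hcont : ∀ g : G, Continuous (fun x : Tt => g • x))
    (h3 : ThreeDiscontinuous G Tt) (h2 : TwoCocompact G Tt)
    (o : Tt) (hinj : Function.Injective (fun g : G => g • o))
    (hopen : ∀ g : G, IsOpen ({g • o} : Set Tt))
    (dG : GraphDist G)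
    (hinv : ∀ g x y : G, dG.d (g * x) (g * y) = dG.d x y)
    (f : ℕ → ℝ) (K : ℝ) (hK : 0 < K) (hf : IsFloydFunction f K)
    (hcomp : ∀ g h : G, dist (g • o) (h • o) ≤ dG.floydDist f 1 g h)
    (c : ℝ) (hc : 0 < c) (p : Tt) (hp : IsConical G p)
    (γ : ℤ → G) (hγ : dG.IsQuasigeodesicLine c γ) :
    ¬ (Tendsto (fun k : ℕ => γ (k : ℤ) • o) atTop (nhds p) ∧
       Tendsto (fun k : ℕ => γ (-(k : ℤ)) • o) atTop (nhds p)) :=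
  stmt17_general hcont o hinj hopen dG hinv f K hf hcomp c hc p hp γ hγ
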